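/- If Alice has a winning strategy in the synchronization game on a DFA with n ≥ 2 states, then she can win making at most C(n,2)·(n−2) + 1 moves, where C(n,2) = n(n−1)/2. -/
import Mathlib


/-- Apply a word (list of letters) to a state of a DFA with transition function `δ`. -/
def applyWord {Q A : Type*} (δ : Q → A → Q) (q : Q) : List A → Q
  | [] => q
  | a :: w => applyWord δ (δ q a) w

/-- The history (list) of letters played after `n` moves of the synchronization game,
when Alice uses strategy `σA` and Bob uses strategy `σB`; Alice moves first, i.e.
the letters at even indices are chosen by Alice and those at odd indices by Bob. -/
def playHist {A : Type*} (σA σB : List A → A) : ℕ → List A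
  | 0 => []
  | n + 1 =>
      let h := playHist σA σB n
      h ++ [if n % 2 = 0 then σA h else σB h]

/-- `w` synchronizes the position `P` (a set of states holding coins) to a single state. -/
def IsResetFrom {Q A : Type*} [DecidableEq Q] (δ : Q → A → Q) (P : Finset Q)
    (w : List A) : Prop :=
  (P.image fun q => applyWord δ q w).card = 1

/-- Alice has a winning strategy in the synchronization game starting from position `P`. -/
def AliceWins {Q A : Type*} [DecidableEq Q] (δ : Q → A → Q) (P : Finset Q) : Prop :=
  ∃ σA : List A → A, ∀ σB : List A → A, ∃ k : ℕ,
    IsResetFrom δ P (playHist σA σB k)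

/-- Alice has a strategy in the synchronization game starting from position `P` that
guarantees reaching a singleton position in a play in which Alice has chosen at most
`m` letters (after `k` letters in total, Alice has chosen `(k + 1) / 2` of them). -/
def AliceWinsWithin {Q A : Type*} [DecidableEq Q] (δ : Q → A → Q) (P : Finset Q)
    (m : ℕ) : Prop :=
  ∃ σA : List A → A, ∀ σB : List A → A, ∃ k : ℕ,
    IsResetFrom δ P (playHist σA σB k) ∧ (k + 1) / 2 ≤ m

/-- Bob has a winning strategy in the synchronization game starting from position `P`:
against every strategy of Alice the position never becomes a singleton. -/
def BobWins {Q A : Type*} [DecidableEq Q] (δ : Q → A → Q) (P : Finset Q) : Prop :=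
  ∃ σB : List A → A, ∀ σA : List A → A, ∀ k : ℕ,
    ¬ IsResetFrom δ P (playHist σA σB k)

section GameAux

open Classical

variable {Q A : Type*} [DecidableEq Q]

/-- Alice can merge the pair `(p,q)` within `i` full rounds of the pair game. -/
def Win (δ : Q → A → Q) : ℕ → Q → Q → Prop
  | 0, p, q => p = q
  | i + 1, p, q => p = q ∨ ∃ a : A, ∀ b : A, Win δ i (δ (δ p a) b) (δ (δ q a) b)

lemma win_of_eq {δ : Q → A → Q} {i : ℕ} {p q : Q} (h : p = q) : Win δ i p q := by
  cases i with
  | zero => exact h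
  | succ i => exact Or.inl h

lemma win_zero {δ : Q → A → Q} {p q : Q} (h : Win δ 0 p q) : p = q := h

lemma win_mono {δ : Q → A → Q} : ∀ {i : ℕ} {p q : Q}, Win δ i p q → Win δ (i + 1) p q := by
  intro i
  induction i with
  | zero => intro p q h; exact Or.inl h
  | succ i ih =>
      intro p q h
      rcases h with h | ⟨a, ha⟩
      · exact Or.inl h
      · exact Or.inr ⟨a, fun b => ih (ha b)⟩

lemma win_le {δ : Q → A → Q} {i j : ℕ} (hij : i ≤ j) {p q : Q} (h : Win δ i p q) :
    Win δ j p q := by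
  induction hij with
  | refl => exact h
  | step _ ih => exact win_mono ih

lemma win_symm {δ : Q → A → Q} : ∀ {i : ℕ} {p q : Q}, Win δ i p q → Win δ i q p := by
  intro i
  induction i with
  | zero => intro p q h; exact h.symm
  | succ i ih =>
      intro p q h
      rcases h with h | ⟨a, ha⟩
      · exact Or.inl h.symm
      · exact Or.inr ⟨a, fun b => ih (ha b)⟩

lemma win_stable {δ : Q → A → Q} (i : ℕ)
    (hs : ∀ p q, Win δ (i + 1) p q → Win δ i p q) :
    ∀ j (p q : Q), Win δ j p q → Win δ i p q := by
  intro j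
  induction j with
  | zero => intro p q h; exact win_le (Nat.zero_le i) h
  | succ j ih =>
      intro p q h
      rcases h with h | ⟨a, ha⟩
      · exact win_of_eq h
      · exact hs _ _ (Or.inr ⟨a, fun b => ih _ _ (ha b)⟩)

variable [Fintype Q]

noncomputable def WinSet (δ : Q → A → Q) (i : ℕ) : Finset (Q × Q) :=
  Finset.univ.filter (fun x => Win δ i x.1 x.2)

lemma mem_winSet {δ : Q → A → Q} {i : ℕ} {x : Q × Q} :
    x ∈ WinSet δ i ↔ Win δ i x.1 x.2 := by
  simp [WinSet]

lemma winSet_mono {δ : Q → A → Q} {i j : ℕ} (hij : i ≤ j) : WinSet δ i ⊆ WinSet δ j := by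
  intro x hx
  exact mem_winSet.mpr (win_le hij (mem_winSet.mp hx))

lemma card_winSet_zero (δ : Q → A → Q) : Fintype.card Q ≤ (WinSet δ 0).card := by
  have hsub : Finset.univ.image (fun q : Q => (q, q)) ⊆ WinSet δ 0 := by
    intro x hx
    simp only [Finset.mem_image] at hx
    obtain ⟨q, _, rfl⟩ := hx
    exact mem_winSet.mpr rfl
  calc Fintype.card Q = (Finset.univ.image (fun q : Q => (q, q))).card := by
        rw [Finset.card_image_of_injective _ (fun a b h => (Prod.mk.injEq _ _ _ _ ▸ h).1)]
        simp
    _ ≤ (WinSet δ 0).card := Finset.card_le_card hsub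

lemma win_card (δ : Q → A → Q) :
    ∀ i : ℕ, (∀ j (p q : Q), Win δ j p q → Win δ i p q) ∨
      Fintype.card Q + 2 * i ≤ (WinSet δ i).card := by
  intro i
  induction i with
  | zero => exact Or.inr (by simpa using card_winSet_zero δ)
  | succ i ih =>
      rcases ih with ih | ih
      · exact Or.inl (fun j p q h => win_mono (ih j p q h))
      · by_cases hs : ∀ p q : Q, Win δ (i + 1) p q → Win δ i p q
        · exact Or.inl (fun j p q h => win_mono (win_stable i hs j p q h))
        · right
          push_neg at hs
          obtain ⟨p, q, hw, hnw⟩ := hs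
          have hpq : p ≠ q := fun h => hnw (win_of_eq h)
          have hqp : ¬ Win δ i q p := fun h => hnw (win_symm h)
          have hmemp : (p, q) ∉ WinSet δ i := fun h => hnw (mem_winSet.mp h)
          have hmemq : (q, p) ∉ WinSet δ i := fun h => hqp (mem_winSet.mp h)
          have hsub : insert (p, q) (insert (q, p) (WinSet δ i)) ⊆ WinSet δ (i + 1) := by
            intro x hx
            simp only [Finset.mem_insert] at hx
            rcases hx with rfl | rfl | hx
            · exact mem_winSet.mpr hw
            · exact mem_winSet.mpr (win_symm hw)
            · exact winSet_mono (Nat.le_succ i) hx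
          have hne : (p, q) ∉ insert (q, p) (WinSet δ i) := by
            simp only [Finset.mem_insert]
            rintro (h | h)
            · exact hpq (Prod.mk.injEq _ _ _ _ ▸ h).1
            · exact hmemp h
          have hcard : (WinSet δ i).card + 2 ≤ (WinSet δ (i + 1)).card := by
            have := Finset.card_le_card hsub
            rwa [Finset.card_insert_of_notMem hne, Finset.card_insert_of_notMem hmemq] at this
          omega

lemma win_C (δ : Q → A → Q) (hn : 1 ≤ Fintype.card Q) :
    ∀ j (p q : Q), Win δ j p q → Win δ ((Fintype.card Q).choose 2) p q := by
  rcases win_card δ ((Fintype.card Q).choose 2) with h | h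
  · exact h
  · have h2 : 2 * (Fintype.card Q).choose 2 = Fintype.card Q * (Fintype.card Q - 1) := by
      rw [Nat.choose_two_right]
      refine Nat.mul_div_cancel' ?_
      have heven : Even ((Fintype.card Q - 1) * (Fintype.card Q - 1 + 1)) :=
        Nat.even_mul_succ_self _
      rw [Nat.sub_add_cancel hn, mul_comm] at heven
      exact heven.two_dvd
    have hsq : Fintype.card Q * Fintype.card Q
        = Fintype.card Q + Fintype.card Q * (Fintype.card Q - 1) := by
      cases' Nat.exists_eq_add_of_le hn with m hm
      rw [hm]
      have h1 : 1 + m - 1 = m := by omega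
      rw [h1]
      ring
    have hcard : Fintype.card (Q × Q) ≤ (WinSet δ ((Fintype.card Q).choose 2)).card := by
      rw [Fintype.card_prod]
      omega
    have huniv : WinSet δ ((Fintype.card Q).choose 2) = Finset.univ :=
      Finset.eq_univ_of_card _ (le_antisymm (Finset.card_le_univ _) hcard)
    intro j p q _
    exact mem_winSet.mp (huniv ▸ Finset.mem_univ (p, q))

end GameAux
section GameAux2

open Classical

variable {Q A : Type*} [DecidableEq Q]

lemma applyWord_append (δ : Q → A → Q) (q : Q) (w₁ w₂ : List A) :
    applyWord δ q (w₁ ++ w₂) = applyWord δ (applyWord δ q w₁) w₂ := by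
  induction w₁ generalizing q with
  | nil => rfl
  | cons a w ih => simp [applyWord, ih]

lemma playHist_even {σA σB : List A → A} (j : ℕ) :
    playHist σA σB (2 * j + 1) = playHist σA σB (2 * j) ++ [σA (playHist σA σB (2 * j))] := by
  have h : (2 * j) % 2 = 0 := by omega
  simp [playHist, h]

lemma playHist_odd {σA σB : List A → A} (j : ℕ) :
    playHist σA σB (2 * j + 2)
      = playHist σA σB (2 * j + 1) ++ [σB (playHist σA σB (2 * j + 1))] := by
  have h : ¬ ((2 * j + 1) % 2 = 0) := by omega
  show playHist σA σB ((2 * j + 1) + 1) = _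
  simp [playHist, h]

/-- From a reset word for `univ` all states are mapped to the same state. -/
lemma eq_of_reset {δ : Q → A → Q} {w : List A} [Fintype Q]
    (h : IsResetFrom δ Finset.univ w) (p q : Q) :
    applyWord δ p w = applyWord δ q w := by
  obtain ⟨z, hz⟩ := Finset.card_eq_one.mp h
  have hp : applyWord δ p w ∈ Finset.univ.image fun q => applyWord δ q w :=
    Finset.mem_image_of_mem _ (Finset.mem_univ p)
  have hq : applyWord δ q w ∈ Finset.univ.image fun q => applyWord δ q w :=
    Finset.mem_image_of_mem _ (Finset.mem_univ q)
  rw [hz, Finset.mem_singleton] at hp hq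
  rw [hp, hq]

/-- If Alice wins the big game from `univ`, then every pair belongs to some `Win i`. -/
lemma alice_wins_pairs [Fintype Q] [Nonempty A] {δ : Q → A → Q}
    (h : AliceWins δ Finset.univ) (p q : Q) : ∃ i, Win δ i p q := by
  by_contra hno
  push_neg at hno
  have hcard : 1 ≤ Fintype.card Q := by
    exact Fintype.card_pos_iff.mpr ⟨p⟩
  -- key invariant-preservation property of "Bob wins the pair game" states
  have key : ∀ x y : Q, (∀ i, ¬ Win δ i x y) → ∀ a : A,
      ∃ b : A, ∀ i, ¬ Win δ i (δ (δ x a) b) (δ (δ y a) b) := by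
    intro x y hxy a
    by_contra hc
    push_neg at hc
    have : Win δ ((Fintype.card Q).choose 2 + 1) x y := by
      refine Or.inr ⟨a, fun b => ?_⟩
      obtain ⟨i, hi⟩ := hc b
      exact win_C δ hcard i _ _ hi
    exact hxy _ this
  -- Bob's strategy
  set σB : List A → A := fun hist =>
    if H : ∃ b : A, ∀ i, ¬ Win δ i (δ (applyWord δ p hist) b) (δ (applyWord δ q hist) b)
    then H.choose else Classical.arbitrary A with hσB
  obtain ⟨σA, hA⟩ := h
  obtain ⟨k, hk⟩ := hA σB
  -- the invariant holds at every even stage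
  have inv : ∀ j : ℕ, ∀ i, ¬ Win δ i (applyWord δ p (playHist σA σB (2 * j)))
      (applyWord δ q (playHist σA σB (2 * j))) := by
    intro j
    induction j with
    | zero => simpa [playHist, applyWord] using hno
    | succ j ih =>
        have ha := playHist_even (σA := σA) (σB := σB) j
        set h1 := playHist σA σB (2 * j + 1) with hh1
        have H : ∃ b : A, ∀ i, ¬ Win δ i (δ (applyWord δ p h1) b) (δ (applyWord δ q h1) b) := by
          have := key _ _ ih (σA (playHist σA σB (2 * j)))
          simpa [ha, applyWord_append, applyWord] using this
        have hb : σB h1 = H.choose := by rw [hσB]; exact dif_pos H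
        have hstep := playHist_odd (σA := σA) (σB := σB) j
        have h2 : 2 * (j + 1) = 2 * j + 2 := by ring
        rw [h2, hstep, ← hh1]
        intro i
        have := H.choose_spec i
        rw [applyWord_append, applyWord_append, hb]
        simpa [applyWord] using this
  -- never reset; contradiction
  obtain ⟨j, hj⟩ : ∃ j, k = 2 * j ∨ k = 2 * j + 1 := ⟨k / 2, by omega⟩
  have hne : applyWord δ p (playHist σA σB k) ≠ applyWord δ q (playHist σA σB k) := by
    rcases hj with rfl | rfl
    · exact fun he => inv j 0 (win_of_eq he)
    · intro he
      have hstep := playHist_odd (σA := σA) (σB := σB) j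
      have h2 : 2 * (j + 1) = 2 * j + 2 := by ring
      apply inv (j + 1) 0
      rw [h2, hstep, applyWord_append, applyWord_append, he]
      exact win_of_eq rfl
  exact hne (eq_of_reset hk p q)

end GameAux2
section GameAux3

open Classical

variable {Q A : Type*} [DecidableEq Q] [Fintype Q]

noncomputable def minrank (δ : Q → A → Q) (P : Finset Q) : ℕ :=
  sInf {r | ∃ p ∈ P, ∃ q ∈ P, p ≠ q ∧ Win δ r p q}

noncomputable def phi (δ : Q → A → Q) (P : Finset Q) : ℕ :=
  if 2 ≤ P.card then (P.card - 2) * (Fintype.card Q).choose 2 + minrank δ P else 0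

lemma minrank_le {δ : Q → A → Q} {P : Finset Q} {p q : Q} {r : ℕ}
    (hp : p ∈ P) (hq : q ∈ P) (hpq : p ≠ q) (hw : Win δ r p q) : minrank δ P ≤ r :=
  Nat.sInf_le ⟨p, hp, q, hq, hpq, hw⟩

lemma minrank_spec {δ : Q → A → Q} {P : Finset Q}
    (hall : ∀ p q : Q, Win δ ((Fintype.card Q).choose 2) p q) (hP : 2 ≤ P.card) :
    ∃ p ∈ P, ∃ q ∈ P, p ≠ q ∧ Win δ (minrank δ P) p q := by
  obtain ⟨p, hp, q, hq, hpq⟩ := Finset.one_lt_card.mp hP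
  have hne : {r | ∃ p ∈ P, ∃ q ∈ P, p ≠ q ∧ Win δ r p q}.Nonempty :=
    ⟨(Fintype.card Q).choose 2, p, hp, q, hq, hpq, hall p q⟩
  exact Nat.sInf_mem hne

lemma minrank_pos {δ : Q → A → Q} {P : Finset Q}
    (hall : ∀ p q : Q, Win δ ((Fintype.card Q).choose 2) p q) (hP : 2 ≤ P.card) :
    1 ≤ minrank δ P := by
  obtain ⟨p, hp, q, hq, hpq, hw⟩ := minrank_spec hall hP
  rcases Nat.eq_zero_or_pos (minrank δ P) with h0 | h1
  · rw [h0] at hw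
    exact absurd (win_zero hw) hpq
  · exact h1

lemma minrank_le_C {δ : Q → A → Q} {P : Finset Q}
    (hall : ∀ p q : Q, Win δ ((Fintype.card Q).choose 2) p q) (hP : 2 ≤ P.card) :
    minrank δ P ≤ (Fintype.card Q).choose 2 := by
  obtain ⟨p, hp, q, hq, hpq⟩ := Finset.one_lt_card.mp hP
  exact minrank_le hp hq hpq (hall p q)

lemma phi_pos {δ : Q → A → Q} {P : Finset Q}
    (hall : ∀ p q : Q, Win δ ((Fintype.card Q).choose 2) p q) (hP : 2 ≤ P.card) :
    1 ≤ phi δ P := by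
  rw [phi, if_pos hP]
  have := minrank_pos hall hP
  omega

/-- Progress: from any position with at least two states Alice has a letter making
the potential strictly decrease after Bob's answer. -/
lemma progress {δ : Q → A → Q}
    (hall : ∀ p q : Q, Win δ ((Fintype.card Q).choose 2) p q) {P : Finset Q}
    (hP : 2 ≤ P.card) :
    ∃ a : A, ∀ b : A, phi δ (P.image fun q => δ (δ q a) b) < phi δ P := by
  obtain ⟨p, hp, q, hq, hpq, hw⟩ := minrank_spec hall hP
  have hr1 : 1 ≤ minrank δ P := minrank_pos hall hP
  obtain ⟨r', hr'⟩ : ∃ r', minrank δ P = r' + 1 := ⟨minrank δ P - 1, by omega⟩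
  rw [hr'] at hw
  rcases hw with he | ⟨a, ha⟩
  · exact absurd he hpq
  refine ⟨a, fun b => ?_⟩
  have hp' : δ (δ p a) b ∈ P.image fun q => δ (δ q a) b := Finset.mem_image_of_mem _ hp
  have hq' : δ (δ q a) b ∈ P.image fun q => δ (δ q a) b := Finset.mem_image_of_mem _ hq
  have hw' : Win δ r' (δ (δ p a) b) (δ (δ q a) b) := ha b
  have hcardle : (P.image fun q => δ (δ q a) b).card ≤ P.card := Finset.card_image_le
  have hphiP : phi δ P = (P.card - 2) * (Fintype.card Q).choose 2 + (r' + 1) := by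
    rw [phi, if_pos hP, hr']
  by_cases h1 : 2 ≤ (P.image fun q => δ (δ q a) b).card
  · by_cases hpq' : δ (δ p a) b = δ (δ q a) b
    · -- the tracked pair merged: cardinality drops
      have hdrop : (P.image fun q => δ (δ q a) b).card ≤ P.card - 1 := by
        have himg : (P.image fun q => δ (δ q a) b)
            = ((P.erase q).image fun x => δ (δ x a) b) := by
          apply Finset.Subset.antisymm
          · intro y hy
            obtain ⟨x, hx, rfl⟩ := Finset.mem_image.mp hy
            by_cases hxq : x = q
            · subst hxq
              refine Finset.mem_image.mpr ⟨p, Finset.mem_erase.mpr ⟨hpq, hp⟩, hpq'⟩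
            · exact Finset.mem_image_of_mem _ (Finset.mem_erase.mpr ⟨hxq, hx⟩)
          · exact Finset.image_subset_image (Finset.erase_subset _ _)
        calc (P.image fun q => δ (δ q a) b).card
            ≤ (P.erase q).card := himg ▸ Finset.card_image_le
          _ = P.card - 1 := Finset.card_erase_of_mem hq
      have hm' : minrank δ (P.image fun q => δ (δ q a) b) ≤ (Fintype.card Q).choose 2 :=
        minrank_le_C hall h1
      rw [phi, if_pos h1, hphiP]
      have h3 : 3 ≤ P.card := by omega
      calc ((P.image fun q => δ (δ q a) b).card - 2) * (Fintype.card Q).choose 2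
            + minrank δ (P.image fun q => δ (δ q a) b)
          ≤ (P.card - 3) * (Fintype.card Q).choose 2 + (Fintype.card Q).choose 2 :=
            add_le_add (Nat.mul_le_mul_right _ (by omega)) hm'
        _ = (P.card - 2) * (Fintype.card Q).choose 2 := by
            have he3 : P.card - 3 + 1 = P.card - 2 := by omega
            rw [← he3, Nat.succ_mul]
        _ < (P.card - 2) * (Fintype.card Q).choose 2 + (r' + 1) := by omega
    · -- the tracked pair is still distinct but its rank dropped
      have hm' : minrank δ (P.image fun q => δ (δ q a) b) ≤ r' := minrank_le hp' hq' hpq' hw'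
      rw [phi, if_pos h1, hphiP]
      have := Nat.mul_le_mul_right ((Fintype.card Q).choose 2)
        (show (P.image fun q => δ (δ q a) b).card - 2 ≤ P.card - 2 by omega)
      omega
  · rw [phi, if_neg h1, hphiP]
    omega

/-- A winning Alice must have a letter merging two states. -/
lemma exists_merge [Nonempty A] {δ : Q → A → Q} (hn : 2 ≤ Fintype.card Q)
    (h : AliceWins δ Finset.univ) : ∃ a : A, ∃ p q : Q, p ≠ q ∧ δ p a = δ q a := by
  by_contra hc
  push_neg at hc
  have hinj : ∀ w : List A, Function.Injective (fun q : Q => applyWord δ q w) := by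
    intro w
    induction w with
    | nil => exact fun a b h => h
    | cons a w ih =>
        intro x y hxy
        simp only [applyWord] at hxy
        have h2 : δ x a = δ y a := ih hxy
        by_contra hne
        exact hc a x y hne h2
  obtain ⟨σA, hA⟩ := h
  obtain ⟨k, hk⟩ := hA (fun _ => Classical.arbitrary A)
  have := hk
  rw [IsResetFrom, Finset.card_image_of_injective _ (hinj _), Finset.card_univ] at this
  omega

end GameAux3
/-- Corollary 1: if Alice has a winning strategy in the synchronization game on a DFA with
`n ≥ 2` states, she can win making at most `C(n,2)·(n-2) + 1` moves. -/
theorem alice_wins_within_cubic {Q A : Type*} [Fintype Q] [DecidableEq Q] [Nonempty A]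
    (δ : Q → A → Q) (hn : 2 ≤ Fintype.card Q)
    (h : AliceWins δ Finset.univ) :
    AliceWinsWithin δ Finset.univ
      ((Fintype.card Q).choose 2 * (Fintype.card Q - 2) + 1) := by
  classical
  haveI : Nonempty Q := Fintype.card_pos_iff.mp (by omega)
  have hall : ∀ p q : Q, Win δ ((Fintype.card Q).choose 2) p q := by
    intro p q
    obtain ⟨i, hi⟩ := alice_wins_pairs h p q
    exact win_C δ (by omega) i p q hi
  set σA : List A → A := fun hist =>
    if H : ∃ a : A, ∀ b : A,
        phi δ ((Finset.univ.image fun q => applyWord δ q hist).image fun q => δ (δ q a) b)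
          < phi δ (Finset.univ.image fun q => applyWord δ q hist)
    then H.choose else Classical.arbitrary A with hσA
  refine ⟨σA, fun σB => ?_⟩
  set Pos : ℕ → Finset Q :=
    fun j => Finset.univ.image fun q => applyWord δ q (playHist σA σB (2 * j)) with hPos
  have hP0 : Pos 0 = Finset.univ := by
    rw [hPos]
    simp only [Nat.mul_zero]
    show (Finset.univ.image fun q => applyWord δ q (playHist σA σB 0)) = Finset.univ
    simp [playHist, applyWord]
  have hposcard : ∀ j, 1 ≤ (Pos j).card := by
    intro j
    simp only [hPos]
    exact Finset.card_pos.mpr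
      ⟨_, Finset.mem_image_of_mem _ (Finset.mem_univ (Classical.arbitrary Q))⟩
  have hstep : ∀ j, 2 ≤ (Pos j).card → phi δ (Pos (j + 1)) < phi δ (Pos j) := by
    intro j hj
    have H : ∃ a : A, ∀ b : A,
        phi δ ((Pos j).image fun q => δ (δ q a) b) < phi δ (Pos j) := progress hall hj
    have ha : σA (playHist σA σB (2 * j)) = H.choose := by
      rw [hσA]
      exact dif_pos H
    have hhist : playHist σA σB (2 * (j + 1))
        = playHist σA σB (2 * j)
          ++ [σA (playHist σA σB (2 * j)), σB (playHist σA σB (2 * j + 1))] := by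
      have h2 : 2 * (j + 1) = 2 * j + 2 := by ring
      rw [h2, playHist_odd, playHist_even]
      simp
    have himg : Pos (j + 1)
        = (Pos j).image fun q =>
            δ (δ q (σA (playHist σA σB (2 * j)))) (σB (playHist σA σB (2 * j + 1))) := by
      rw [hPos]
      show (Finset.univ.image fun q => applyWord δ q (playHist σA σB (2 * (j + 1)))) = _
      rw [hhist, Finset.image_image]
      apply Finset.image_congr
      intro x _
      simp [applyWord_append, applyWord, Function.comp]
    rw [himg, ha]
    exact H.choose_spec _
  have hdesc : ∀ j, (∃ i ≤ j, (Pos i).card = 1) ∨ phi δ (Pos j) + j ≤ phi δ (Pos 0) := by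
    intro j
    induction j with
    | zero => right; omega
    | succ j ih =>
        rcases ih with ⟨i, hi, hci⟩ | ih
        · exact Or.inl ⟨i, Nat.le_succ_of_le hi, hci⟩
        · rcases Nat.lt_or_ge (Pos j).card 2 with hc | hc
          · exact Or.inl ⟨j, Nat.le_succ j, by have := hposcard j; omega⟩
          · right
            have := hstep j hc
            omega
  obtain ⟨i, hi, hci⟩ : ∃ i ≤ phi δ (Pos 0), (Pos i).card = 1 := by
    rcases hdesc (phi δ (Pos 0)) with ⟨i, hi, hci⟩ | hphi
    · exact ⟨i, hi, hci⟩
    · refine ⟨phi δ (Pos 0), le_refl _, ?_⟩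
      by_contra hne
      have h2 : 2 ≤ (Pos (phi δ (Pos 0))).card := by
        have := hposcard (phi δ (Pos 0))
        omega
      have := phi_pos hall h2
      omega
  refine ⟨2 * i, hci, ?_⟩
  have hb : phi δ (Pos 0) ≤ (Fintype.card Q).choose 2 * (Fintype.card Q - 2) + 1 := by
    rw [hP0, phi, if_pos (by simpa using hn), Finset.card_univ]
    have hm : minrank δ (Finset.univ : Finset Q) ≤ 1 := by
      obtain ⟨a, p, q, hpq, hme⟩ := exists_merge hn h
      refine minrank_le (Finset.mem_univ p) (Finset.mem_univ q) hpq ?_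
      refine Or.inr ⟨a, fun b => ?_⟩
      show Win δ 0 _ _
      rw [hme]
      exact rfl
    have hcm : (Fintype.card Q - 2) * (Fintype.card Q).choose 2
        = (Fintype.card Q).choose 2 * (Fintype.card Q - 2) := Nat.mul_comm _ _
    omega
  omega
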